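/- Let ω be the standard symplectic form on F_q^{2d} and q sufficiently large. Let A, B be k-dimensional isotropic subspaces with dim(A) = dim(B) = k. Then there is a randomized choice of a (k−1)-dimensional subspace A' ⊆ A and a vector b ∈ B such that A' + span(b) is an isotropic subspace, and for every d_0-dimensional subspace C such that A + C and B + C are both (d_0 + k)-dimensional isotropic subspaces, the probability that dim(A' + span(b) + C) = d_0 + k is at least 1 − O(1/q). -/

import Mathlib

/-!
Pick `b ∈ B` and a hyperplane `A'` of `A` with `ω(A', b) = 0`, so that `A' + span b` is isotropic.
The dimension hypotheses on `A + C` and `B + C` say `A ∩ C = B ∩ C = 0`, and then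
`dim (A' + span b + C) = d₀ + k` as soon as `b ∉ A' + C`.

If `B ∩ Symp(A) = 0`, take any `b ≠ 0` in `B` and `A' = A ∩ b^⊥`: since `A + C` is isotropic,
`A' + C ⊆ Symp(A)`, so `b ∉ A' + C` for every `C`.

Otherwise take `b ≠ 0` in `B ∩ Symp(A)` and `A' = ker φ` for a uniformly random functional `φ`
on `A`. If `b = a + c` with `a ∈ A` and `c ∈ C`, then `a ≠ 0` because `B ∩ C = 0`, and
`b ∈ A' + C` forces `φ a = 0` because `A ∩ C = 0`: an event of probability `1/q`.
If `b ∉ A + C`, nothing can fail.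
-/

open Module

/-- The standard symplectic form on `F^{2d}`. -/
def sympForm (F : Type) [Field F] (d : ℕ) (x y : (Fin d ⊕ Fin d) → F) : F :=
  ∑ i : Fin d, (x (Sum.inl i) * y (Sum.inr i) - x (Sum.inr i) * y (Sum.inl i))

/-- A subspace is isotropic if the symplectic form vanishes identically on it. -/
def IsIsotropic (F : Type) [Field F] (d : ℕ)
    (W : Submodule F ((Fin d ⊕ Fin d) → F)) : Prop :=
  ∀ x ∈ W, ∀ y ∈ W, sympForm F d x y = 0

section BilinForm

variable {R M : Type*} [CommSemiring R] [AddCommMonoid M] [Module R M]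

theorem LinearMap.BilinForm.orthogonal_sup (B : LinearMap.BilinForm R M) (W W' : Submodule R M) :
    B.orthogonal (W ⊔ W') = B.orthogonal W ⊓ B.orthogonal W' := by
  refine le_antisymm (le_inf (orthogonal_le le_sup_left) (orthogonal_le le_sup_right)) ?_
  rintro v ⟨hv, hv'⟩ n hn
  obtain ⟨x, hx, y, hy, rfl⟩ := Submodule.mem_sup.1 hn
  rw [map_add, LinearMap.add_apply, hv x hx, hv' y hy, add_zero]

end BilinForm

section LinearAlgebra

theorem Submodule.add_notMem_sup_of_disjoint {R V : Type*} [Ring R] [AddCommGroup V] [Module R V]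
    {A A' C : Submodule R V} (hA' : A' ≤ A)
    (hAC : Disjoint A C) {a c : V} (ha : a ∈ A) (hc : c ∈ C) (haA' : a ∉ A') :
    a + c ∉ A' ⊔ C := by
  intro h
  obtain ⟨a', ha', c', hc', he⟩ := mem_sup.1 h
  have hdiff : a - a' = c' - c := by rw [sub_eq_sub_iff_add_eq_add, ← he, add_comm]
  have hzero : a - a' = 0 :=
    disjoint_def.1 hAC _ (sub_mem ha (hA' ha')) (hdiff ▸ sub_mem hc' hc)
  exact haA' (sub_eq_zero.1 hzero ▸ ha')

variable {K V : Type*} [DivisionRing K] [AddCommGroup V] [Module K V] [FiniteDimensional K V]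

theorem Submodule.disjoint_of_finrank_sup_eq_add {A C : Submodule K V}
    (h : finrank K ↥(A ⊔ C) = finrank K A + finrank K C) : Disjoint A C := by
  have := finrank_sup_add_finrank_inf_eq A C
  rw [disjoint_iff, ← finrank_eq_zero]
  omega

theorem Submodule.finrank_sup_span_singleton_sup {A' C : Submodule K V} (hA'C : Disjoint A' C)
    {b : V} (hb : b ∉ A' ⊔ C) :
    finrank K ↥(A' ⊔ span K {b} ⊔ C) = finrank K A' + finrank K C + 1 := by
  rw [sup_right_comm, finrank_sup_span_singleton hb, ← finrank_sup_add_finrank_inf_eq,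
    hA'C.eq_bot, finrank_bot, add_zero]

theorem Submodule.finrank_map_subtype_ker {A : Submodule K V} {φ : Dual K A} (hφ : φ ≠ 0) :
    finrank K ↥((LinearMap.ker φ).map A.subtype) = finrank K A - 1 := by
  rw [finrank_map_subtype_eq, ← Dual.finrank_ker_add_one_of_ne_zero hφ, Nat.add_sub_cancel]

end LinearAlgebra

section Probability

theorem PMF.toOuterMeasure_ne_top {α : Type*} (μ : PMF α) (s : Set α) :
    μ.toOuterMeasure s ≠ ⊤ := by
  rw [toOuterMeasure_apply]
  exact μ.tsum_coe_indicator_ne_top s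

variable {α : Type*} [Finite α]

theorem PMF.finsum_ite_toReal (μ : PMF α) (p : α → Prop) [DecidablePred p] :
    ∑ᶠ x, (if p x then (μ x).toReal else 0) = (μ.toOuterMeasure {x | p x}).toReal := by
  have := Fintype.ofFinite α
  rw [finsum_eq_sum_of_fintype, toOuterMeasure_apply_fintype, ENNReal.toReal_sum fun x _ =>
    ne_top_of_le_ne_top (μ.apply_ne_top x) (Set.indicator_le_self _ _ x)]
  exact Finset.sum_congr rfl fun x _ => by
    by_cases hx : p x <;> simp [hx]

theorem PMF.finsum_toReal (μ : PMF α) : ∑ᶠ x, (μ x).toReal = 1 := by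
  simpa [(toOuterMeasure_apply_eq_one_iff _ _).2 (Set.subset_univ _)] using
    μ.finsum_ite_toReal fun _ => True

theorem PMF.toReal_toOuterMeasure_uniformOfFintype_ne_zero {F W : Type*} [Field F] [Fintype F]
    [AddCommGroup W] [Module F W] [Fintype W] {ψ : Dual F W} (hψ : ψ ≠ 0) :
    ((uniformOfFintype W).toOuterMeasure {w | ψ w ≠ 0}).toReal = 1 - 1 / (Fintype.card F : ℝ) := by
  classical
  have hker := Dual.finrank_ker_add_one_of_ne_zero hψ
  have hcardW : Fintype.card W = Fintype.card F ^ (finrank F (LinearMap.ker ψ) + 1) := by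
    rw [hker, card_eq_pow_finrank (K := F) (V := W)]
  have hcardK : Fintype.card {w // ψ w = 0} = Fintype.card F ^ finrank F (LinearMap.ker ψ) := by
    rw [← card_eq_pow_finrank]
    exact Fintype.card_congr (Equiv.refl _)
  have hq : (0 : ℝ) < Fintype.card F := by exact_mod_cast Fintype.card_pos
  rw [toOuterMeasure_uniformOfFintype_apply]
  simp only [Set.coe_ofPred, ne_eq]
  rw [Fintype.card_subtype_compl, hcardK, hcardW, ENNReal.toReal_div, ENNReal.toReal_natCast,
    ENNReal.toReal_natCast,
    Nat.cast_sub (Nat.pow_le_pow_right Fintype.card_pos (Nat.le_add_right _ 1))]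
  push_cast
  field_simp
  ring

end Probability

section Symplectic

variable {F : Type} [Field F] {d : ℕ}

def sympBilin (F : Type) [Field F] (d : ℕ) : LinearMap.BilinForm F ((Fin d ⊕ Fin d) → F) := by
  refine LinearMap.mk₂ F (sympForm F d) ?_ ?_ ?_ ?_ <;> intros <;>
    simp only [sympForm, Pi.add_apply, Pi.smul_apply, smul_eq_mul, Finset.mul_sum,
      ← Finset.sum_add_distrib] <;>
    exact Finset.sum_congr rfl fun _ _ => by ring

theorem sympBilin_isAlt : (sympBilin F d).IsAlt := fun x =>
  (Finset.sum_eq_zero fun _ _ => by ring : sympForm F d x x = 0)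

theorem isIsotropic_iff_le_orthogonal {W : Submodule F ((Fin d ⊕ Fin d) → F)} :
    IsIsotropic F d W ↔ W ≤ (sympBilin F d).orthogonal W :=
  ⟨fun h y hy x hx => h x hx y hy, fun h x hx _ hy => h hy x hx⟩

theorem IsIsotropic.mono {W W' : Submodule F ((Fin d ⊕ Fin d) → F)} (h : W ≤ W')
    (hW' : IsIsotropic F d W') : IsIsotropic F d W :=
  fun x hx y hy => hW' x (h hx) y (h hy)

theorem IsIsotropic.sup_span_singleton {W : Submodule F ((Fin d ⊕ Fin d) → F)}
    {b : (Fin d ⊕ Fin d) → F} (hW : IsIsotropic F d W) (hb : b ∈ (sympBilin F d).orthogonal W) :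
    IsIsotropic F d (W ⊔ Submodule.span F {b}) := by
  have hspan : ∀ v, sympBilin F d b v = 0 →
      v ∈ (sympBilin F d).orthogonal (Submodule.span F {b}) := by
    intro v hv n hn
    obtain ⟨t, rfl⟩ := Submodule.mem_span_singleton.1 hn
    rw [map_smul, LinearMap.smul_apply, hv, smul_zero]
  rw [isIsotropic_iff_le_orthogonal, LinearMap.BilinForm.orthogonal_sup]
  refine sup_le (le_inf (isIsotropic_iff_le_orthogonal.1 hW) fun w hw => ?_) ?_
  · exact hspan w (sympBilin_isAlt.isRefl _ _ (hb w hw))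
  · exact (Submodule.span_singleton_le_iff_mem _ _).2 ⟨hb, hspan b (sympBilin_isAlt b)⟩

end Symplectic

section RandomChoice

variable {F : Type} [Field F] [Fintype F] {d : ℕ}

def IsGoodRandomChoice (A B : Submodule F ((Fin d ⊕ Fin d) → F))
    (μ : PMF (Submodule F ((Fin d ⊕ Fin d) → F) × ((Fin d ⊕ Fin d) → F))) : Prop :=
  (∀ x ∈ μ.support, x.1 ≤ A ∧ finrank F x.1 = finrank F A - 1 ∧ x.2 ∈ B ∧
    IsIsotropic F d (x.1 ⊔ Submodule.span F {x.2})) ∧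
  ∀ C : Submodule F ((Fin d ⊕ Fin d) → F), IsIsotropic F d (A ⊔ C) → Disjoint A C →
    Disjoint B C → 1 - 1 / (Fintype.card F : ℝ) ≤ (μ.toOuterMeasure {x | x.2 ∉ x.1 ⊔ C}).toReal

variable {A B : Submodule F ((Fin d ⊕ Fin d) → F)}

theorem exists_isGoodRandomChoice_of_inf_orthogonal_eq_bot (hA : IsIsotropic F d A)
    (hB : B ≠ ⊥) (hBA : B ⊓ (sympBilin F d).orthogonal A = ⊥) :
    ∃ μ, IsGoodRandomChoice A B μ := by
  obtain ⟨b, hbB, hb0⟩ := Submodule.exists_mem_ne_zero_of_ne_bot hB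
  have hbA : b ∉ (sympBilin F d).orthogonal A := fun h =>
    hb0 ((Submodule.mem_bot F).1 (hBA ▸ Submodule.mem_inf.2 ⟨hbB, h⟩))
  let f : Dual F A := (sympBilin F d).flip b ∘ₗ A.subtype
  have hf : f ≠ 0 := fun h => hbA fun a ha => LinearMap.congr_fun h ⟨a, ha⟩
  have hA'A : (LinearMap.ker f).map A.subtype ≤ A := Submodule.map_subtype_le _ _
  refine ⟨PMF.pure ((LinearMap.ker f).map A.subtype, b), ?_, fun C hAC _ _ => ?_⟩
  · rintro x hx
    rw [PMF.mem_support_pure_iff] at hx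
    subst hx
    refine ⟨hA'A, Submodule.finrank_map_subtype_ker hf, hbB, (hA.mono hA'A).sup_span_singleton ?_⟩
    rintro _ ⟨a, ha, rfl⟩
    exact ha
  · have hb : b ∉ (LinearMap.ker f).map A.subtype ⊔ C := fun h =>
      hbA ((isIsotropic_iff_le_orthogonal.1 hAC).trans
        (LinearMap.BilinForm.orthogonal_le le_sup_left) (sup_le_sup_right hA'A C h))
    rw [(PMF.toOuterMeasure_apply_eq_one_iff _ _).2 (by simpa using hb), ENNReal.toReal_one]
    exact sub_le_self _ (by positivity)

theorem exists_isGoodRandomChoice_of_mem_orthogonal (hA : IsIsotropic F d A) (hA0 : A ≠ ⊥)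
    {b : (Fin d ⊕ Fin d) → F} (hbB : b ∈ B) (hb0 : b ≠ 0)
    (hbA : b ∈ (sympBilin F d).orthogonal A) :
    ∃ μ, IsGoodRandomChoice A B μ := by
  classical
  have : Finite (Dual F A) := Module.finite_of_finite F
  let _ := Fintype.ofFinite (Dual F A)
  have : Nontrivial A := Submodule.nontrivial_iff_ne_bot.2 hA0
  obtain ⟨φ₀, hφ₀⟩ := exists_ne (0 : Dual F A)
  -- `φ = 0` has no hyperplane as kernel; it is sent to `φ₀`, and lies in the bad event anyway.
  let H : Dual F A → Dual F A := fun φ => if φ = 0 then φ₀ else φ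
  have hH : ∀ φ, H φ ≠ 0 := fun φ => by by_cases hφ : φ = 0 <;> simp [H, hφ, hφ₀]
  let G : Dual F A → Submodule F ((Fin d ⊕ Fin d) → F) × ((Fin d ⊕ Fin d) → F) :=
    fun φ => ((LinearMap.ker (H φ)).map A.subtype, b)
  refine ⟨(PMF.uniformOfFintype _).map G, ?_, fun C _ hAC hBC => ?_⟩
  · rintro _ hx
    obtain ⟨φ, -, rfl⟩ := (PMF.mem_support_map_iff _ _ _).1 hx
    have hA'A := Submodule.map_subtype_le A (LinearMap.ker (H φ))
    exact ⟨hA'A, Submodule.finrank_map_subtype_ker (hH φ), hbB,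
      (hA.mono hA'A).sup_span_singleton (LinearMap.BilinForm.orthogonal_le hA'A hbA)⟩
  rw [PMF.toOuterMeasure_map_apply]
  by_cases hbAC : b ∈ A ⊔ C
  · obtain ⟨a, ha, c, hc, rfl⟩ := Submodule.mem_sup.1 hbAC
    have ha0 : (⟨a, ha⟩ : A) ≠ 0 := fun h => by
      rw [show a = 0 from congrArg Subtype.val h, zero_add] at hb0 hbB
      exact hb0 (Submodule.disjoint_def.1 hBC c hbB hc)
    have heval : Dual.eval F A ⟨a, ha⟩ ≠ 0 := fun h =>
      ha0 ((forall_dual_apply_eq_zero_iff F _).1 fun φ => LinearMap.congr_fun h φ)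
    rw [← PMF.toReal_toOuterMeasure_uniformOfFintype_ne_zero heval]
    refine ENNReal.toReal_mono (PMF.toOuterMeasure_ne_top _ _) (PMF.toOuterMeasure_mono _ ?_)
    rintro φ ⟨hφa, -⟩
    have hφ : φ ≠ 0 := fun h => hφa (by simp [h])
    refine Submodule.add_notMem_sup_of_disjoint (Submodule.map_subtype_le _ _) hAC ha hc ?_
    rintro ⟨y, hy, rfl⟩
    simp only [H, if_neg hφ] at hy
    exact hφa (by simpa using hy)
  · have hall : (PMF.uniformOfFintype _).support ⊆ G ⁻¹' {x | x.2 ∉ x.1 ⊔ C} := fun _ _ h =>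
      hbAC (sup_le_sup_right (Submodule.map_subtype_le _ _) C h)
    rw [(PMF.toOuterMeasure_apply_eq_one_iff _ _).2 hall, ENNReal.toReal_one]
    exact sub_le_self _ (by positivity)

theorem exists_isGoodRandomChoice (hA : IsIsotropic F d A) (hA0 : A ≠ ⊥) (hB0 : B ≠ ⊥) :
    ∃ μ, IsGoodRandomChoice A B μ := by
  by_cases hBA : B ⊓ (sympBilin F d).orthogonal A = ⊥
  · exact exists_isGoodRandomChoice_of_inf_orthogonal_eq_bot hA hB0 hBA
  · obtain ⟨b, hb, hb0⟩ := Submodule.exists_mem_ne_zero_of_ne_bot hBA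
    exact exists_isGoodRandomChoice_of_mem_orthogonal hA hA0 (Submodule.mem_inf.1 hb).1 hb0
      (Submodule.mem_inf.1 hb).2

end RandomChoice

/-- There are an absolute constant `K > 0` and a threshold `q₀`
such that for all `q ≥ q₀`: given `k`-dimensional isotropic subspaces `A, B` of
`F_q^{2d}`, there is a randomized choice (a probability distribution `P`,
depending only on `A` and `B`) of a `(k−1)`-dimensional subspace `A' ⊆ A` and a
vector `b ∈ B` with `A' + span(b)` isotropic, such that for every `d₀`-dimensional
subspace `C` for which `A + C` and `B + C` are `(d₀+k)`-dimensional isotropic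
subspaces, `Pr[dim(A' + span(b) + C) = d₀ + k] ≥ 1 − K/q`. -/
theorem stmt15 : ∃ K : ℝ, 0 < K ∧ ∃ q₀ : ℕ,
    ∀ (q d k d₀ : ℕ) (F : Type) [Field F] [Fintype F],
      Fintype.card F = q → q₀ ≤ q → 1 ≤ k →
      ∀ A B : Submodule F ((Fin d ⊕ Fin d) → F),
        IsIsotropic F d A → IsIsotropic F d B →
        finrank F A = k → finrank F B = k →
        ∃ P : Submodule F ((Fin d ⊕ Fin d) → F) × ((Fin d ⊕ Fin d) → F) → ℝ,
          (∀ x, 0 ≤ P x) ∧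
          (∑ᶠ x : Submodule F ((Fin d ⊕ Fin d) → F) × ((Fin d ⊕ Fin d) → F),
            P x) = 1 ∧
          (∀ A' b, P (A', b) ≠ 0 →
            A' ≤ A ∧ finrank F A' = k - 1 ∧ b ∈ B ∧
            IsIsotropic F d (A' ⊔ Submodule.span F {b})) ∧
          (∀ C : Submodule F ((Fin d ⊕ Fin d) → F), finrank F C = d₀ →
            IsIsotropic F d (A ⊔ C) → finrank F ↥(A ⊔ C) = d₀ + k →
            IsIsotropic F d (B ⊔ C) → finrank F ↥(B ⊔ C) = d₀ + k →
            1 - K / (q : ℝ) ≤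
              ∑ᶠ x : Submodule F ((Fin d ⊕ Fin d) → F) × ((Fin d ⊕ Fin d) → F),
                if finrank F ↥(x.1 ⊔ Submodule.span F {x.2} ⊔ C) = d₀ + k
                  then P x else 0) := by
  refine ⟨1, one_pos, 0, fun q d k d₀ F _ _ hq _ hk A B hA _ hAk hBk => ?_⟩
  have hA0 : A ≠ ⊥ := by rintro rfl; rw [finrank_bot] at hAk; omega
  have hB0 : B ≠ ⊥ := by rintro rfl; rw [finrank_bot] at hBk; omega
  obtain ⟨μ, hsupp, hgood⟩ := exists_isGoodRandomChoice hA hA0 hB0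
  refine ⟨fun x => (μ x).toReal, fun _ => ENNReal.toReal_nonneg, μ.finsum_toReal,
    fun A' b hP => ?_, fun C hC hAC hACk _ hBCk => ?_⟩
  · obtain ⟨hA'A, hA'k, hbB, hiso⟩ := hsupp (A', b) fun h => hP (by simp [h])
    exact ⟨hA'A, hAk ▸ hA'k, hbB, hiso⟩
  have hAC' := Submodule.disjoint_of_finrank_sup_eq_add (by rw [hACk, hAk, hC, add_comm])
  have hBC' := Submodule.disjoint_of_finrank_sup_eq_add (by rw [hBCk, hBk, hC, add_comm])
  rw [μ.finsum_ite_toReal, ← hq]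
  refine (hgood C hAC hAC' hBC').trans
    (ENNReal.toReal_mono (μ.toOuterMeasure_ne_top _) (μ.toOuterMeasure_mono ?_))
  rintro x ⟨hx, hxμ⟩
  obtain ⟨hxA, hxk, -, -⟩ := hsupp x hxμ
  show finrank F ↥(x.1 ⊔ Submodule.span F {x.2} ⊔ C) = d₀ + k
  rw [Submodule.finrank_sup_span_singleton_sup (hAC'.mono_left hxA) hx, hxk, hAk, hC]
  omega
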